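/- arXiv:2509.15109 — 3 statements merged into one kernel-verified Lean document; each statement's English description precedes it below -/
import Mathlib

section
/- The system response matrices Φ_xw = (I − ZA − ZBKC)^{-1}, Φ_xe = Φ_xw ZBK, Φ_uw = KC Φ_xw, Φ_ue = KC Φ_xw ZBK + K satisfy the affine identity [I − ZA, −ZB] Φ = [I, 0], where Φ is the block matrix [[Φ_xw, Φ_xe],[Φ_uw, Φ_ue]]. -/
theorem stmt4 {X U Y : Type*} [Fintype X] [Fintype U] [Fintype Y]
    [DecidableEq X] [DecidableEq U] [DecidableEq Y]
    (Z A : Matrix X X ℝ) (B : Matrix X U ℝ) (K : Matrix U Y ℝ) (C : Matrix Y X ℝ)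
    (hM : IsUnit (1 - Z * A - Z * B * K * C))
    (Φxw : Matrix X X ℝ) (Φxe : Matrix X Y ℝ) (Φuw : Matrix U X ℝ) (Φue : Matrix U Y ℝ)
    (hxw : Φxw = (1 - Z * A - Z * B * K * C)⁻¹)
    (hxe : Φxe = Φxw * (Z * B * K))
    (huw : Φuw = K * C * Φxw)
    (hue : Φue = K * C * Φxw * (Z * B * K) + K) :
    Matrix.fromCols (1 - Z * A) (-(Z * B)) * Matrix.fromBlocks Φxw Φxe Φuw Φue
      = Matrix.fromCols 1 0 := by
  have hd : IsUnit (1 - Z * A - Z * B * K * C).det :=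
    (Matrix.isUnit_iff_isUnit_det _).mp hM
  have h1 : (1 - Z * A - Z * B * K * C) * Φxw = 1 := by
    rw [hxw]; exact Matrix.mul_nonsing_inv _ hd
  have e1 : (1 - Z * A) * Φxw + -(Z * B) * Φuw = 1 := by
    rw [huw]
    calc (1 - Z * A) * Φxw + -(Z * B) * (K * C * Φxw)
        = (1 - Z * A - Z * B * K * C) * Φxw := by
          noncomm_ring
          simp [Matrix.mul_assoc]
      _ = 1 := h1
  have e2 : (1 - Z * A) * Φxe + -(Z * B) * Φue = 0 := by
    rw [hxe, hue]
    calc (1 - Z * A) * (Φxw * (Z * B * K)) + -(Z * B) * (K * C * Φxw * (Z * B * K) + K)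
        = (1 - Z * A - Z * B * K * C) * Φxw * (Z * B * K) - Z * B * K := by
          noncomm_ring
          simp [Matrix.mul_assoc, Matrix.add_mul, Matrix.sub_mul, Matrix.mul_add]
          abel
      _ = 0 := by rw [h1]; simp
  rw [Matrix.fromCols_mul_fromBlocks, e1, e2]
end

section
/- The system response matrices Φ_xw = (I − ZA − ZBKC)^{-1}, Φ_xe = Φ_xw ZBK, Φ_uw = KC Φ_xw, Φ_ue = KC Φ_xw ZBK + K satisfy Φ [[I − ZA],[−C]] = [[I],[0]], where Φ = [[Φ_xw, Φ_xe],[Φ_uw, Φ_ue]]. -/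
/-!
Writing `M = 1 - Z A - Z B K C`, the first block row of `Φ [[1 - Z A], [-C]]` is `Φxw M` and the
second is `K C Φxw M - K C`; both reduce to the claimed blocks because `Φxw` is a left inverse of
`M`.
-/

namespace Matrix

variable {R X U Y : Type*} [Ring R] [Fintype X] [Fintype U] [Fintype Y] [DecidableEq X]

theorem fromBlocks_systemResponse_mul_fromRows (Z A : Matrix X X R) (B : Matrix X U R)
    (K : Matrix U Y R) (C : Matrix Y X R) {L : Matrix X X R}
    (hL : L * (1 - Z * A - Z * B * K * C) = 1) :
    fromBlocks L (L * (Z * B * K)) (K * C * L) (K * C * L * (Z * B * K) + K) *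
        fromRows (1 - Z * A) (-C) = fromRows 1 0 := by
  have top : L * (1 - Z * A) + L * (Z * B * K) * -C = L * (1 - Z * A - Z * B * K * C) := by
    simp only [Matrix.mul_sub, Matrix.mul_neg, Matrix.mul_assoc]
    abel
  have bottom : K * C * L * (1 - Z * A) + (K * C * L * (Z * B * K) + K) * -C
      = K * C * (L * (1 - Z * A - Z * B * K * C)) - K * C := by
    simp only [Matrix.mul_sub, Matrix.mul_neg, Matrix.mul_one, Matrix.add_mul, Matrix.mul_assoc]
    abel
  rw [fromBlocks_mul_fromRows, fromRows_ext_iff, top, bottom, hL, Matrix.mul_one, sub_self]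
  exact ⟨rfl, rfl⟩

end Matrix

theorem stmt5_general {X U Y : Type*} [Fintype X] [Fintype U] [Fintype Y]
    [DecidableEq X]
    (Z A : Matrix X X ℝ) (B : Matrix X U ℝ) (K : Matrix U Y ℝ) (C : Matrix Y X ℝ)
    (hM : IsUnit (1 - Z * A - Z * B * K * C))
    (Φxw : Matrix X X ℝ) (Φxe : Matrix X Y ℝ) (Φuw : Matrix U X ℝ) (Φue : Matrix U Y ℝ)
    (hxw : Φxw = (1 - Z * A - Z * B * K * C)⁻¹)
    (hxe : Φxe = Φxw * (Z * B * K))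
    (huw : Φuw = K * C * Φxw)
    (hue : Φue = K * C * Φxw * (Z * B * K) + K) :
    Matrix.fromBlocks Φxw Φxe Φuw Φue * Matrix.fromRows (1 - Z * A) (-C)
      = Matrix.fromRows 1 0 := by
  subst hxe huw hue
  refine Matrix.fromBlocks_systemResponse_mul_fromRows Z A B K C ?_
  rw [hxw]
  exact Matrix.nonsing_inv_mul _ ((Matrix.isUnit_iff_isUnit_det _).mp hM)

theorem stmt5 {X U Y : Type*} [Fintype X] [Fintype U] [Fintype Y]
    [DecidableEq X] [DecidableEq U] [DecidableEq Y]
    (Z A : Matrix X X ℝ) (B : Matrix X U ℝ) (K : Matrix U Y ℝ) (C : Matrix Y X ℝ)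
    (hM : IsUnit (1 - Z * A - Z * B * K * C))
    (Φxw : Matrix X X ℝ) (Φxe : Matrix X Y ℝ) (Φuw : Matrix U X ℝ) (Φue : Matrix U Y ℝ)
    (hxw : Φxw = (1 - Z * A - Z * B * K * C)⁻¹)
    (hxe : Φxe = Φxw * (Z * B * K))
    (huw : Φuw = K * C * Φxw)
    (hue : Φue = K * C * Φxw * (Z * B * K) + K) :
    Matrix.fromBlocks Φxw Φxe Φuw Φue * Matrix.fromRows (1 - Z * A) (-C)
      = Matrix.fromRows 1 0 :=
  stmt5_general Z A B K C hM Φxw Φxe Φuw Φue hxw hxe huw hue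
end

section
/- Let Φ_xw, Φ_xe, Φ_uw, Φ_ue satisfy the affine constraints [I − ZA, −ZB][[Φ_xw, Φ_xe],[Φ_uw, Φ_ue]] = [I, 0], and suppose Φ_xw is invertible. Then the matrix K := Φ_ue − Φ_uw Φ_xw^{-1} Φ_xe satisfies (I − ZA)Φ_xw − ZB Φ_uw = I and (I − ZA)Φ_xe = ZB Φ_ue, and moreover Φ_uw = KC Φ_xw implies Φ_ue = KC Φ_xe + K. -/
theorem stmt8 {X U Y : Type*} [Fintype X] [Fintype U] [Fintype Y]
    [DecidableEq X] [DecidableEq U] [DecidableEq Y]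
    (Z A : Matrix X X ℝ) (B : Matrix X U ℝ) (C : Matrix Y X ℝ)
    (Φxw : Matrix X X ℝ) (Φxe : Matrix X Y ℝ) (Φuw : Matrix U X ℝ) (Φue : Matrix U Y ℝ)
    (haff : Matrix.fromCols (1 - Z * A) (-(Z * B)) * Matrix.fromBlocks Φxw Φxe Φuw Φue
      = Matrix.fromCols 1 0)
    (hΦ : IsUnit Φxw)
    (K : Matrix U Y ℝ) (hK : K = Φue - Φuw * Φxw⁻¹ * Φxe) :
    (1 - Z * A) * Φxw - Z * B * Φuw = 1 ∧
    (1 - Z * A) * Φxe = Z * B * Φue ∧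
    (Φuw = K * C * Φxw → Φue = K * C * Φxe + K) := by
  rw [Matrix.fromCols_mul_fromBlocks] at haff
  have h := Matrix.fromCols_inj haff
  obtain ⟨h1, h2⟩ := h
  have e1 : (1 - Z * A) * Φxw - Z * B * Φuw = 1 := by
    rw [sub_eq_add_neg, ← Matrix.neg_mul]; exact h1
  have e2 : (1 - Z * A) * Φxe = Z * B * Φue := by
    rwa [Matrix.neg_mul, add_neg_eq_zero] at h2
  refine ⟨e1, e2, fun h3 => ?_⟩
  have hinv : Φxw * Φxw⁻¹ = 1 := Matrix.mul_nonsing_inv _ ((Matrix.isUnit_iff_isUnit_det Φxw).mp hΦ)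
  have hx : Φuw * Φxw⁻¹ = K * C := by rw [h3, Matrix.mul_assoc, hinv, Matrix.mul_one]
  rw [hx] at hK
  rw [add_comm]
  exact (sub_eq_iff_eq_add.mp hK.symm)
end
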